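/- arXiv:2303.06958 — 5 statements merged into one kernel-verified Lean document; each statement's English description precedes it below -/
import Mathlib

section
/- Let A ∈ ℝ^{m×n}, X ∈ ℝ^{l×n}, and Π_C ∈ ℝ^{n×l} with XΠ_C invertible and C = AΠ_C of full column rank. Then, with V defined by Vᵀ = C†A and P₁ = Π_C(XΠ_C)^{-1}X, one has the spectral-norm bound ‖A − C Vᵀ‖ ≤ ‖I − P₁‖ · ‖A(I − X†X)‖. -/
open scoped Matrix.Norms.L2Operator
open Matrix

def IsMoorePenrose {m n : ℕ} (A : Matrix (Fin m) (Fin n) ℝ) (B : Matrix (Fin n) (Fin m) ℝ) : Prop :=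
  A * B * A = A ∧ B * A * B = B ∧ (A * B)ᵀ = A * B ∧ (B * A)ᵀ = B * A

def IsSelection {m l : ℕ} (P : Matrix (Fin m) (Fin l) ℝ) : Prop :=
  ∃ f : Fin l → Fin m, Function.Injective f ∧ P = Matrix.of fun i j => if i = f j then 1 else 0

theorem stmt5 {m n l : ℕ} (A : Matrix (Fin m) (Fin n) ℝ) (X : Matrix (Fin l) (Fin n) ℝ)
    (Pc : Matrix (Fin n) (Fin l) ℝ) (hinv : IsUnit (X * Pc))
    (C : Matrix (Fin m) (Fin l) ℝ) (hC : C = A * Pc) (hrank : C.rank = l)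
    (Xd : Matrix (Fin n) (Fin l) ℝ) (hXd : IsMoorePenrose X Xd)
    (Cd : Matrix (Fin l) (Fin m) ℝ) (hCd : IsMoorePenrose C Cd)
    (P1 : Matrix (Fin n) (Fin n) ℝ) (hP1 : P1 = Pc * (X * Pc)⁻¹ * X) :
    ‖A - C * (Cd * A)‖ ≤ ‖(1 : Matrix (Fin n) (Fin n) ℝ) - P1‖ * ‖A * (1 - Xd * X)‖ := by
  obtain ⟨hC1, hC2, hC3, hC4⟩ := hCd
  obtain ⟨hX1, hX2, hX3, hX4⟩ := hXd
  -- Cd * C = 1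
  have hQrank : (Cd * C).rank = l := by
    refine le_antisymm ((Cd * C).rank_le_card_width.trans (by simp)) ?_
    calc l = C.rank := hrank.symm
    _ = (C * (Cd * C)).rank := by rw [← Matrix.mul_assoc, hC1]
    _ ≤ (Cd * C).rank := Matrix.rank_mul_le_right _ _
  have hsurj : Function.Surjective (Cd * C).mulVecLin := by
    rw [← LinearMap.range_eq_top]
    apply Submodule.eq_top_of_finrank_eq
    simpa [Matrix.rank] using hQrank
  have hidem : (Cd * C) * (Cd * C) = Cd * C := by
    rw [← Matrix.mul_assoc, hC2]
  have hCdC : Cd * C = 1 := by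
    have h1 : ∀ v, (Cd * C).mulVecLin v = v := by
      intro v
      obtain ⟨w, rfl⟩ := hsurj v
      rw [← LinearMap.comp_apply, ← Matrix.mulVecLin_mul, hidem]
    ext i j
    simpa [Matrix.mulVecLin, Matrix.mulVec_single, Matrix.one_apply, Pi.single_apply, Matrix.mulVec,
        dotProduct, Matrix.mul_apply]
      using congr_fun (h1 (Pi.single j 1)) i
  -- (X*Pc) * (X*Pc)⁻¹ = 1
  have hXPc : (X * Pc) * (X * Pc)⁻¹ = 1 :=
    Matrix.mul_nonsing_inv _ ((Matrix.isUnit_iff_isUnit_det _).mp hinv)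
  have hXP1 : X * P1 = X := by
    rw [hP1, ← Matrix.mul_assoc, ← Matrix.mul_assoc, Matrix.mul_assoc X Pc, ← Matrix.mul_assoc X,
      hXPc, Matrix.one_mul]
  have hAP1 : A * P1 = C * ((X * Pc)⁻¹ * X) := by
    rw [hP1, hC]; simp only [Matrix.mul_assoc]
  have hCCdAP1 : C * (Cd * (A * P1)) = A * P1 := by
    rw [hAP1, ← Matrix.mul_assoc Cd C, hCdC, Matrix.one_mul]
  -- key factorization
  have key : A - C * (Cd * A) =
      (1 - C * Cd) * (A * (1 - Xd * X)) * (1 - P1) := by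
    simp only [Matrix.mul_sub, Matrix.sub_mul, Matrix.mul_one, Matrix.one_mul, Matrix.mul_assoc]
    rw [hXP1, hCCdAP1]
    abel
  -- norm of 1 - C*Cd is ≤ 1
  have hQsym : (1 - C * Cd)ᴴ = 1 - C * Cd := by
    have h2 : (C * Cd)ᴴ = C * Cd := by
      rw [Matrix.conjTranspose_eq_transpose_of_trivial]; exact hC3
    rw [Matrix.conjTranspose_sub, Matrix.conjTranspose_one, h2]
  have hQidem : (1 - C * Cd) * (1 - C * Cd) = 1 - C * Cd := by
    have h3 : C * (Cd * (C * Cd)) = C * Cd := by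
      rw [← Matrix.mul_assoc Cd C, hCdC, Matrix.one_mul]
    simp only [Matrix.mul_sub, Matrix.sub_mul, Matrix.mul_one, Matrix.one_mul, Matrix.mul_assoc]
    rw [h3]; abel
  have hQnorm : ‖(1 : Matrix (Fin m) (Fin m) ℝ) - C * Cd‖ ≤ 1 := by
    have h := Matrix.l2_opNorm_conjTranspose_mul_self (1 - C * Cd)
    rw [hQsym, hQidem] at h
    nlinarith [norm_nonneg ((1 : Matrix (Fin m) (Fin m) ℝ) - C * Cd)]
  rw [key]
  calc ‖(1 - C * Cd) * (A * (1 - Xd * X)) * (1 - P1)‖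
      ≤ ‖(1 - C * Cd) * (A * (1 - Xd * X))‖ * ‖(1 : Matrix (Fin n) (Fin n) ℝ) - P1‖ :=
        Matrix.l2_opNorm_mul _ _
    _ ≤ (‖(1 : Matrix (Fin m) (Fin m) ℝ) - C * Cd‖ * ‖A * (1 - Xd * X)‖) *
        ‖(1 : Matrix (Fin n) (Fin n) ℝ) - P1‖ :=
        mul_le_mul_of_nonneg_right (Matrix.l2_opNorm_mul _ _) (norm_nonneg _)
    _ ≤ (1 * ‖A * (1 - Xd * X)‖) * ‖(1 : Matrix (Fin n) (Fin n) ℝ) - P1‖ :=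
        mul_le_mul_of_nonneg_right
          (mul_le_mul_of_nonneg_right hQnorm (norm_nonneg _)) (norm_nonneg _)
    _ = ‖(1 : Matrix (Fin n) (Fin n) ℝ) - P1‖ * ‖A * (1 - Xd * X)‖ := by ring
end

section
/- Let A ∈ ℝ^{m×n}, C ∈ ℝ^{m×l}, R ∈ ℝ^{l×n}, and set M = C†AR†. Then ‖A − CMR‖ ≤ ‖A − CC†A‖ + ‖A − AR†R‖ in spectral norm. -/
open scoped Matrix.Norms.L2Operator
open Matrix

theorem stmt7 {m n l : ℕ} (A : Matrix (Fin m) (Fin n) ℝ)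
    (C : Matrix (Fin m) (Fin l) ℝ) (R : Matrix (Fin l) (Fin n) ℝ)
    (Cd : Matrix (Fin l) (Fin m) ℝ) (hCd : IsMoorePenrose C Cd)
    (Rd : Matrix (Fin n) (Fin l) ℝ) (hRd : IsMoorePenrose R Rd)
    (M : Matrix (Fin l) (Fin l) ℝ) (hM : M = Cd * A * Rd) :
    ‖A - C * M * R‖ ≤ ‖A - C * Cd * A‖ + ‖A - A * Rd * R‖ := by
  obtain ⟨hC1, _, hC3, _⟩ := hCd
  set P : Matrix (Fin m) (Fin m) ℝ := C * Cd with hP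
  have hP2 : P * P = P := by
    rw [hP, Matrix.mul_assoc C Cd (C * Cd), ← Matrix.mul_assoc Cd C Cd,
      ← Matrix.mul_assoc C (Cd * C) Cd, ← Matrix.mul_assoc C Cd C, hC1]
  have hPt : Pᴴ = P := by
    have : Pᵀ = P := hC3
    rw [Matrix.conjTranspose_eq_transpose_of_trivial]; exact this
  have hPn : ‖P‖ ≤ 1 := by
    have h := Matrix.l2_opNorm_conjTranspose_mul_self P
    rw [hPt, hP2] at h
    nlinarith [norm_nonneg P, sq_nonneg (‖P‖ - 1)]
  have key : A - C * M * R = (A - P * A) + P * (A - A * Rd * R) := by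
    rw [hM, hP]
    simp only [Matrix.mul_sub, Matrix.mul_assoc]
    abel
  rw [key]
  calc ‖(A - P * A) + P * (A - A * Rd * R)‖
      ≤ ‖A - P * A‖ + ‖P * (A - A * Rd * R)‖ := norm_add_le _ _
    _ ≤ ‖A - P * A‖ + ‖A - A * Rd * R‖ := by
        have := Matrix.l2_opNorm_mul P (A - A * Rd * R)
        have h1 : ‖P‖ * ‖A - A * Rd * R‖ ≤ ‖A - A * Rd * R‖ := by
          nlinarith [norm_nonneg (A - A * Rd * R)]
        linarith
end

section
/- Let R ∈ ℝ^{l×n} have full row rank with R = Π^T A for some A ∈ ℝ^{m×n} and selection matrix Π ∈ ℝ^{m×l} (columns of the identity). Then A R† R = P A where P = A Rᵀ (R Rᵀ)^{-1} Πᵀ, and P is an oblique projector (P² = P). -/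
open scoped Matrix.Norms.L2Operator
open Matrix

lemma isUnit_of_rank_eq_card {k : ℕ} (M : Matrix (Fin k) (Fin k) ℝ) (h : M.rank = k) :
    IsUnit M := by
  rw [Matrix.isUnit_iff_isUnit_det, isUnit_iff_ne_zero]
  intro hdet
  obtain ⟨v, hMv, hv⟩ := (Matrix.exists_mulVec_eq_zero_iff).2 hdet
  have hrn := LinearMap.finrank_range_add_finrank_ker M.mulVecLin
  rw [show Module.finrank ℝ (LinearMap.range M.mulVecLin) = M.rank from rfl, h] at hrn
  simp only [Module.finrank_fin_fun] at hrn
  have hker : Module.finrank ℝ (LinearMap.ker M.mulVecLin) = 0 := by omega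
  have : LinearMap.ker M.mulVecLin = ⊥ := Submodule.finrank_eq_zero.mp hker
  have hvk : v ∈ LinearMap.ker M.mulVecLin := by simp [LinearMap.mem_ker, hv]
  rw [this, Submodule.mem_bot] at hvk
  exact hMv hvk

theorem stmt8 {m n l : ℕ} (A : Matrix (Fin m) (Fin n) ℝ)
    (Pr : Matrix (Fin m) (Fin l) ℝ) (hPr : IsSelection Pr)
    (R : Matrix (Fin l) (Fin n) ℝ) (hR : R = Prᵀ * A) (hrank : R.rank = l)
    (Rd : Matrix (Fin n) (Fin l) ℝ) (hRd : Rd = Rᵀ * (R * Rᵀ)⁻¹)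
    (P : Matrix (Fin m) (Fin m) ℝ) (hP : P = A * Rᵀ * (R * Rᵀ)⁻¹ * Prᵀ) :
    A * Rd * R = P * A ∧ P * P = P := by
  have hu : IsUnit (R * Rᵀ) :=
    isUnit_of_rank_eq_card _ (by rw [Matrix.rank_self_mul_transpose]; exact hrank)
  have hud : IsUnit (R * Rᵀ).det := (Matrix.isUnit_iff_isUnit_det _).mp hu
  constructor
  · rw [hRd, hP]
    conv_rhs => rw [Matrix.mul_assoc, ← hR]
    simp [Matrix.mul_assoc]
  · rw [hP]
    have key : Prᵀ * (A * Rᵀ) = R * Rᵀ := by rw [← Matrix.mul_assoc, ← hR]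
    calc A * Rᵀ * (R * Rᵀ)⁻¹ * Prᵀ * (A * Rᵀ * (R * Rᵀ)⁻¹ * Prᵀ)
        = A * Rᵀ * ((R * Rᵀ)⁻¹ * (Prᵀ * (A * Rᵀ)) * (R * Rᵀ)⁻¹) * Prᵀ := by
          simp [Matrix.mul_assoc]
      _ = A * Rᵀ * (R * Rᵀ)⁻¹ * Prᵀ := by
          rw [key, Matrix.nonsing_inv_mul _ hud, Matrix.one_mul]
end

section
/- Let A ∈ ℝ^{m×n}, Π ∈ ℝ^{m×l} a selection matrix with R = ΠᵀA of full row rank, and Y ∈ ℝ^{m×l} with ΠᵀY invertible. Define P_Y = Y(ΠᵀY)^{-1}Πᵀ and P_R = ARᵀ(RRᵀ)^{-1}Πᵀ. Then P_Y P_R = P_Y and ‖A − AR†R‖ ≤ ‖I − P_Y‖ · ‖(I − YY†)A‖ in spectral norm. -/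
open scoped Matrix.Norms.L2Operator
open Matrix

lemma aux_isUnit_of_rank {l : ℕ} (M : Matrix (Fin l) (Fin l) ℝ) (h : M.rank = l) : IsUnit M := by
  have h2 : LinearMap.range M.mulVecLin = ⊤ := by
    apply Submodule.eq_top_of_finrank_eq
    simpa [Matrix.rank] using h
  have hs : Function.Surjective M.mulVecLin := LinearMap.range_eq_top.mp h2
  have hb : Function.Bijective M.mulVecLin :=
    ⟨(LinearMap.injective_iff_surjective).mpr hs, hs⟩
  have hu : IsUnit (Matrix.toLinAlgEquiv' M) := by
    rw [Module.End.isUnit_iff]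
    have : (Matrix.toLinAlgEquiv' M : (Fin l → ℝ) →ₗ[ℝ] Fin l → ℝ) = M.mulVecLin :=
      Matrix.toLin'_apply' M
    rw [this]; exact hb
  have := hu.map (Matrix.toLinAlgEquiv' (R := ℝ) (n := Fin l)).symm.toAlgHom
  simpa using this

lemma aux_proj_norm {n : ℕ} (P : Matrix (Fin n) (Fin n) ℝ) (hsym : Pᵀ = P)
    (hidem : P * P = P) : ‖P‖ ≤ 1 := by
  have h1 : ‖Pᴴ * P‖ = ‖P‖ * ‖P‖ := Matrix.l2_opNorm_conjTranspose_mul_self P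
  have h2 : Pᴴ = P := by
    rw [Matrix.conjTranspose]
    convert hsym using 1; ext i j; simp
  rw [h2, hidem] at h1
  nlinarith [norm_nonneg P]

theorem stmt10 {m n l : ℕ} (A : Matrix (Fin m) (Fin n) ℝ)
    (Pr : Matrix (Fin m) (Fin l) ℝ) (hPr : IsSelection Pr)
    (R : Matrix (Fin l) (Fin n) ℝ) (hR : R = Prᵀ * A) (hrank : R.rank = l)
    (Y : Matrix (Fin m) (Fin l) ℝ) (hinv : IsUnit (Prᵀ * Y))
    (Rd : Matrix (Fin n) (Fin l) ℝ) (hRd : IsMoorePenrose R Rd)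
    (Yd : Matrix (Fin l) (Fin m) ℝ) (hYd : IsMoorePenrose Y Yd)
    (PY PR : Matrix (Fin m) (Fin m) ℝ)
    (hPY : PY = Y * (Prᵀ * Y)⁻¹ * Prᵀ)
    (hPR : PR = A * Rᵀ * (R * Rᵀ)⁻¹ * Prᵀ) :
    PY * PR = PY ∧
      ‖A - A * Rd * R‖ ≤ ‖(1 : Matrix (Fin m) (Fin m) ℝ) - PY‖ * ‖(1 - Y * Yd) * A‖ := by
  obtain ⟨hRdR1, hRdR2, _, hRdR4⟩ := hRd
  have hRRT : IsUnit (R * Rᵀ) := by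
    apply aux_isUnit_of_rank
    rw [Matrix.rank_self_mul_transpose, hrank]
  have hRRTd : IsUnit (R * Rᵀ).det := (Matrix.isUnit_iff_isUnit_det _).mp hRRT
  have hinvd : IsUnit (Prᵀ * Y).det := (Matrix.isUnit_iff_isUnit_det _).mp hinv
  have hRRTinv : (R * Rᵀ) * (R * Rᵀ)⁻¹ = 1 := Matrix.mul_nonsing_inv _ hRRTd
  have hPYY : PY * Y = Y := by
    rw [hPY]
    simp only [Matrix.mul_assoc]
    rw [Matrix.nonsing_inv_mul _ hinvd, Matrix.mul_one]
  constructor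
  · rw [hPY, hPR]
    have h1 : Prᵀ * (A * (Rᵀ * ((R * Rᵀ)⁻¹ * Prᵀ))) = Prᵀ := by
      calc Prᵀ * (A * (Rᵀ * ((R * Rᵀ)⁻¹ * Prᵀ)))
          = ((Prᵀ * A) * Rᵀ) * ((R * Rᵀ)⁻¹ * Prᵀ) := by simp only [Matrix.mul_assoc]
        _ = ((R * Rᵀ) * (R * Rᵀ)⁻¹) * Prᵀ := by
            rw [← hR]; simp only [Matrix.mul_assoc]
        _ = Prᵀ := by rw [hRRTinv, Matrix.one_mul]
    calc Y * (Prᵀ * Y)⁻¹ * Prᵀ * (A * Rᵀ * (R * Rᵀ)⁻¹ * Prᵀ)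
        = Y * (Prᵀ * Y)⁻¹ * (Prᵀ * (A * (Rᵀ * ((R * Rᵀ)⁻¹ * Prᵀ)))) := by
          simp only [Matrix.mul_assoc]
      _ = Y * (Prᵀ * Y)⁻¹ * Prᵀ := by rw [h1]
  · have hPA : PY * A = Y * (Prᵀ * Y)⁻¹ * R := by
      rw [hPY, Matrix.mul_assoc, ← hR]
    have h3 : PY * (A * (Rd * R)) = PY * A := by
      rw [← Matrix.mul_assoc, hPA, Matrix.mul_assoc (Y * (Prᵀ * Y)⁻¹) R (Rd * R),
        ← Matrix.mul_assoc R Rd R, hRdR1]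
    have h1 : (1 - PY) * (Y * Yd) = 0 := by
      rw [Matrix.sub_mul, Matrix.one_mul, ← Matrix.mul_assoc, hPYY, sub_self]
    have h2 : (1 - PY) * (1 - Y * Yd) = 1 - PY := by
      rw [Matrix.mul_sub, Matrix.mul_one, h1, sub_zero]
    have key : A - A * Rd * R = (1 - PY) * ((1 - Y * Yd) * A) * (1 - Rd * R) := by
      have e1 : (1 - PY) * ((1 - Y * Yd) * A) = (1 - PY) * A := by
        rw [← Matrix.mul_assoc, h2]
      rw [e1, Matrix.mul_sub, Matrix.mul_one, Matrix.sub_mul, Matrix.one_mul]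
      rw [Matrix.sub_mul, Matrix.mul_assoc PY A (Rd * R), h3, ← Matrix.mul_assoc A Rd R]
      abel
    have hproj : ‖(1 : Matrix (Fin n) (Fin n) ℝ) - Rd * R‖ ≤ 1 := by
      apply aux_proj_norm
      · rw [Matrix.transpose_sub, Matrix.transpose_one, hRdR4]
      · have : (Rd * R) * (Rd * R) = Rd * R := by
          rw [← Matrix.mul_assoc, hRdR2]
        rw [Matrix.mul_sub, Matrix.mul_one, Matrix.sub_mul, Matrix.one_mul, this]
        abel
    calc ‖A - A * Rd * R‖ = ‖(1 - PY) * ((1 - Y * Yd) * A) * (1 - Rd * R)‖ := by rw [key]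
      _ ≤ ‖(1 - PY) * ((1 - Y * Yd) * A)‖ * ‖(1 : Matrix (Fin n) (Fin n) ℝ) - Rd * R‖ :=
          Matrix.l2_opNorm_mul _ _
      _ ≤ ‖(1 : Matrix (Fin m) (Fin m) ℝ) - PY‖ * ‖(1 - Y * Yd) * A‖ *
            ‖(1 : Matrix (Fin n) (Fin n) ℝ) - Rd * R‖ := by
          gcongr
          exact Matrix.l2_opNorm_mul _ _
      _ ≤ ‖(1 : Matrix (Fin m) (Fin m) ℝ) - PY‖ * ‖(1 - Y * Yd) * A‖ * 1 := by
          gcongr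
      _ = ‖(1 : Matrix (Fin m) (Fin m) ℝ) - PY‖ * ‖(1 - Y * Yd) * A‖ := mul_one _
end

section
/- Let D₁ ∈ ℝ^{t₁×t₂} and D₂ ∈ ℝ^{t₂×t₃}. Then (D₁D₂)† = D₂†D₁† if and only if range(D₁ᵀD₁D₂) ⊆ range(D₂) and range(D₂D₂ᵀD₁ᵀ) ⊆ range(D₁ᵀ). -/
open scoped Matrix.Norms.L2Operator
open Matrix

section Aux

lemma IsMoorePenrose.transpose {m n : ℕ} {A : Matrix (Fin m) (Fin n) ℝ}
    {B : Matrix (Fin n) (Fin m) ℝ} (h : IsMoorePenrose A B) : IsMoorePenrose Aᵀ Bᵀ := by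
  obtain ⟨h1, h2, h3, h4⟩ := h
  refine ⟨?_, ?_, ?_, ?_⟩
  · rw [← Matrix.transpose_mul, ← Matrix.transpose_mul, ← Matrix.mul_assoc, h1]
  · rw [← Matrix.transpose_mul, ← Matrix.transpose_mul, ← Matrix.mul_assoc, h2]
  · rw [← Matrix.transpose_mul, h4, h4]
  · rw [← Matrix.transpose_mul, h3, h3]

lemma mp_unique {m n : ℕ} {P : Matrix (Fin m) (Fin n) ℝ} {X Y : Matrix (Fin n) (Fin m) ℝ}
    (hX : IsMoorePenrose P X) (hY : IsMoorePenrose P Y) : X = Y := by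
  obtain ⟨x1, x2, x3, x4⟩ := hX
  obtain ⟨y1, y2, y3, y4⟩ := hY
  have hPXY : P * X = P * Y := by
    calc P*X = (P*X)ᵀ := x3.symm
      _ = Xᵀ*Pᵀ := Matrix.transpose_mul _ _
      _ = Xᵀ*((P*Y*P)ᵀ) := by rw [y1]
      _ = Xᵀ*(Pᵀ*(P*Y)ᵀ) := by rw [Matrix.transpose_mul (P*Y) P]
      _ = Xᵀ*(Pᵀ*(P*Y)) := by rw [y3]
      _ = (Xᵀ*Pᵀ)*(P*Y) := by rw [Matrix.mul_assoc]
      _ = (P*X)ᵀ*(P*Y) := by rw [Matrix.transpose_mul]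
      _ = (P*X)*(P*Y) := by rw [x3]
      _ = (P*X*P)*Y := by simp only [Matrix.mul_assoc]
      _ = P*Y := by rw [x1]
  have hXYP : X * P = Y * P := by
    calc X*P = (X*P)ᵀ := x4.symm
      _ = Pᵀ*Xᵀ := Matrix.transpose_mul _ _
      _ = (P*(Y*P))ᵀ*Xᵀ := by rw [← Matrix.mul_assoc, y1]
      _ = ((Y*P)ᵀ*Pᵀ)*Xᵀ := by rw [Matrix.transpose_mul P (Y*P)]
      _ = ((Y*P)*Pᵀ)*Xᵀ := by rw [y4]
      _ = (Y*P)*(Pᵀ*Xᵀ) := by rw [Matrix.mul_assoc]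
      _ = (Y*P)*(X*P)ᵀ := by rw [Matrix.transpose_mul]
      _ = (Y*P)*(X*P) := by rw [x4]
      _ = Y*(P*X*P) := by simp only [Matrix.mul_assoc]
      _ = Y*P := by rw [x1]
  calc X = X*P*X := x2.symm
    _ = Y*P*X := by rw [hXYP]
    _ = Y*(P*X) := by rw [Matrix.mul_assoc]
    _ = Y*(P*Y) := by rw [hPXY]
    _ = Y*P*Y := by rw [← Matrix.mul_assoc]
    _ = Y := y2

lemma range_le_iff {m n k : ℕ} {B : Matrix (Fin m) (Fin n) ℝ} {B' : Matrix (Fin n) (Fin m) ℝ}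
    (h : IsMoorePenrose B B') (M : Matrix (Fin m) (Fin k) ℝ) :
    LinearMap.range M.mulVecLin ≤ LinearMap.range B.mulVecLin ↔ B * B' * M = M := by
  constructor
  · intro hle
    have key : ∀ v : Fin k → ℝ, (B * B' * M) *ᵥ v = M *ᵥ v := by
      intro v
      have hmem : M.mulVecLin v ∈ LinearMap.range M.mulVecLin := ⟨v, rfl⟩
      obtain ⟨y, hy⟩ := hle hmem
      rw [Matrix.mulVecLin_apply, Matrix.mulVecLin_apply] at hy
      calc (B*B'*M) *ᵥ v = (B*B') *ᵥ (M *ᵥ v) := by rw [Matrix.mulVec_mulVec]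
        _ = (B*B') *ᵥ (B *ᵥ y) := by rw [hy]
        _ = (B*B'*B) *ᵥ y := by rw [Matrix.mulVec_mulVec]
        _ = B *ᵥ y := by rw [h.1]
        _ = M *ᵥ v := hy
    ext i j
    have h2 := key (Pi.single j 1)
    rw [Matrix.mulVec_single_one, Matrix.mulVec_single_one] at h2
    exact congrFun h2 i
  · intro he x hx
    obtain ⟨v, rfl⟩ := hx
    exact ⟨(B'*M) *ᵥ v, by
      rw [Matrix.mulVecLin_apply, Matrix.mulVecLin_apply, Matrix.mulVec_mulVec,
        ← Matrix.mul_assoc, he]⟩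

lemma tr_mul_self_eq_zero {a b : ℕ} {X : Matrix (Fin a) (Fin b) ℝ} (h : Xᵀ * X = 0) : X = 0 := by
  apply Matrix.conjTranspose_mul_self_eq_zero.mp
  rw [Matrix.conjTranspose_eq_transpose_of_trivial]
  exact h

lemma comm_trick {n : ℕ} {M T : Matrix (Fin n) (Fin n) ℝ} (hM : Mᵀ = M) (hT : Tᵀ = T)
    (h : T*(M*T) = M*T) : M*T = T*M := by
  have hs : (M*T)ᵀ = M*T := by
    conv_lhs => rw [← h]
    rw [Matrix.transpose_mul, Matrix.transpose_mul, hM, hT, Matrix.mul_assoc, h]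
  calc M*T = (M*T)ᵀ := hs.symm
    _ = Tᵀ*Mᵀ := Matrix.transpose_mul _ _
    _ = T*M := by rw [hM, hT]

lemma ST_comm {n : ℕ} {S T M N : Matrix (Fin n) (Fin n) ℝ}
    (hSt : Sᵀ = S) (hTt : Tᵀ = T) (hNM : N*M = S) (hMS : M*S = M) (hC : M*T = T*M) :
    S*T = T*S := by
  have h1 : S*T*S = S*T := by
    calc S*T*S = N*M*T*S := by rw [hNM]
      _ = N*(M*T)*S := by rw [Matrix.mul_assoc N M T]
      _ = N*(T*M)*S := by rw [hC]
      _ = N*T*(M*S) := by simp only [Matrix.mul_assoc]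
      _ = N*T*M := by rw [hMS]
      _ = N*(T*M) := by rw [Matrix.mul_assoc]
      _ = N*(M*T) := by rw [hC]
      _ = N*M*T := by rw [Matrix.mul_assoc]
      _ = S*T := by rw [hNM]
  have h2 : (S*T*S)ᵀ = S*T*S := by
    rw [Matrix.transpose_mul, Matrix.transpose_mul, hSt, hTt, ← Matrix.mul_assoc]
  calc S*T = S*T*S := h1.symm
    _ = (S*T*S)ᵀ := h2.symm
    _ = (S*T)ᵀ := by rw [h1]
    _ = Tᵀ*Sᵀ := Matrix.transpose_mul _ _
    _ = T*S := by rw [hSt, hTt]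

variable {m n p : ℕ} {A : Matrix (Fin m) (Fin n) ℝ} {A' : Matrix (Fin n) (Fin m) ℝ}
  {B : Matrix (Fin n) (Fin p) ℝ} {B' : Matrix (Fin p) (Fin n) ℝ}

lemma mp_of_conditions (hA : IsMoorePenrose A A') (hB : IsMoorePenrose B B')
    (hE1 : B * B' * (Aᵀ * A * B) = Aᵀ * A * B)
    (hE2 : A' * A * (B * Bᵀ * Aᵀ) = B * Bᵀ * Aᵀ) :
    IsMoorePenrose (A * B) (B' * A') := by
  -- basic transposed identities
  have hsA : A'ᵀ*Aᵀ = A*A' := by rw [← Matrix.transpose_mul, hA.2.2.1]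
  have htA' : Aᵀ*A'ᵀ = A'*A := by rw [← Matrix.transpose_mul, hA.2.2.2]
  have htB : B'ᵀ*Bᵀ = B*B' := by rw [← Matrix.transpose_mul, hB.2.2.1]
  have htB' : Bᵀ*B'ᵀ = B'*B := by rw [← Matrix.transpose_mul, hB.2.2.2]
  have h_tAA' : Aᵀ*A*A' = Aᵀ := by
    have h := congrArg Matrix.transpose hA.1
    rw [Matrix.transpose_mul, hA.2.2.1] at h
    rw [Matrix.mul_assoc]; exact h
  have hB'BBt : B'*B*Bᵀ = Bᵀ := by
    have h := congrArg Matrix.transpose hB.1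
    rw [Matrix.mul_assoc] at h
    rw [Matrix.transpose_mul, hB.2.2.2] at h
    exact h
  have hBexp : B*Bᵀ*B'ᵀ = B := by
    rw [Matrix.mul_assoc, htB', ← Matrix.mul_assoc, hB.1]
  have hAexp : A'ᵀ*Aᵀ*A = A := by rw [hsA, hA.1]
  have hMt : (Aᵀ*A)ᵀ = Aᵀ*A := by rw [Matrix.transpose_mul, Matrix.transpose_transpose]
  have hM2t : (B*Bᵀ)ᵀ = B*Bᵀ := by rw [Matrix.transpose_mul, Matrix.transpose_transpose]
  -- commutation C1
  have hyp1 : (B*B')*((Aᵀ*A)*(B*B')) = (Aᵀ*A)*(B*B') := by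
    have h := congrArg (· * B') hE1
    simp only [Matrix.mul_assoc] at h ⊢
    exact h
  have hC1 : (Aᵀ*A)*(B*B') = (B*B')*(Aᵀ*A) := comm_trick hMt hB.2.2.1 hyp1
  -- commutation C2
  have hyp2 : (A'*A)*((B*Bᵀ)*(A'*A)) = (B*Bᵀ)*(A'*A) := by
    have h := congrArg (· * A'ᵀ) hE2
    simp only [Matrix.mul_assoc] at h ⊢
    rw [htA'] at h
    exact h
  have hC2 : (B*Bᵀ)*(A'*A) = (A'*A)*(B*Bᵀ) := comm_trick hM2t hA.2.2.2 hyp2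
  -- S T = T S
  have hNM : A'*A'ᵀ*(Aᵀ*A) = A'*A := by
    rw [Matrix.mul_assoc, ← Matrix.mul_assoc A'ᵀ Aᵀ A, hsA, hA.1]
  have hMS : Aᵀ*A*(A'*A) = Aᵀ*A := by rw [← Matrix.mul_assoc, h_tAA']
  have hST : (A'*A)*(B*B') = (B*B')*(A'*A) := ST_comm hA.2.2.2 hB.2.2.1 hNM hMS hC1
  -- the four Penrose equations
  have hG1 : A*B*(B'*A')*(A*B) = A*B := by
    have e : A*B*(B'*A')*(A*B) = A*((B*B')*(A'*A))*B := by simp only [Matrix.mul_assoc]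
    rw [e, ← hST]
    simp only [Matrix.mul_assoc]
    rw [← Matrix.mul_assoc B B' B, hB.1, ← Matrix.mul_assoc A A' (A*B),
      ← Matrix.mul_assoc (A*A') A B, hA.1]
  have hG2 : (B'*A')*(A*B)*(B'*A') = B'*A' := by
    have e : (B'*A')*(A*B)*(B'*A') = B'*((A'*A)*(B*B'))*A' := by simp only [Matrix.mul_assoc]
    rw [e, hST]
    simp only [Matrix.mul_assoc]
    rw [← Matrix.mul_assoc A' A A', hA.2.1, ← Matrix.mul_assoc B' B (B'*A'),
      ← Matrix.mul_assoc (B'*B) B' A', hB.2.1]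
  have hPQ : A*B*(B'*A') = A'ᵀ*(B*B')*Aᵀ := by
    calc A*B*(B'*A') = A'ᵀ*Aᵀ*A*(B*(B'*A')) := by rw [hAexp, Matrix.mul_assoc]
      _ = A'ᵀ*((Aᵀ*A)*(B*B'))*A' := by simp only [Matrix.mul_assoc]
      _ = A'ᵀ*((B*B')*(Aᵀ*A))*A' := by rw [hC1]
      _ = A'ᵀ*(B*B')*(Aᵀ*A*A') := by simp only [Matrix.mul_assoc]
      _ = A'ᵀ*(B*B')*Aᵀ := by rw [h_tAA']
  have hG3 : (A*B*(B'*A'))ᵀ = A*B*(B'*A') := by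
    have h' : (A'ᵀ*(B*B')*Aᵀ)ᵀ = A'ᵀ*(B*B')*Aᵀ := by
      rw [Matrix.transpose_mul, Matrix.transpose_mul, Matrix.transpose_transpose,
        Matrix.transpose_transpose, hB.2.2.1, ← hPQ]
      simp only [Matrix.mul_assoc]
    rw [hPQ]; exact h'
  have hQP : B'*A'*(A*B) = Bᵀ*(A'*A)*B'ᵀ := by
    calc B'*A'*(A*B) = B'*(A'*A)*B := by simp only [Matrix.mul_assoc]
      _ = B'*(A'*A)*(B*Bᵀ*B'ᵀ) := by rw [hBexp]
      _ = B'*((A'*A)*(B*Bᵀ))*B'ᵀ := by simp only [Matrix.mul_assoc]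
      _ = B'*((B*Bᵀ)*(A'*A))*B'ᵀ := by rw [hC2]
      _ = B'*B*Bᵀ*((A'*A)*B'ᵀ) := by simp only [Matrix.mul_assoc]
      _ = Bᵀ*((A'*A)*B'ᵀ) := by rw [hB'BBt]
      _ = Bᵀ*(A'*A)*B'ᵀ := by simp only [Matrix.mul_assoc]
  have hG4 : (B'*A'*(A*B))ᵀ = B'*A'*(A*B) := by
    have h' : (Bᵀ*(A'*A)*B'ᵀ)ᵀ = Bᵀ*(A'*A)*B'ᵀ := by
      rw [Matrix.transpose_mul, Matrix.transpose_mul, Matrix.transpose_transpose,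
        Matrix.transpose_transpose, hA.2.2.2, ← hQP]
      simp only [Matrix.mul_assoc]
    rw [hQP]; exact h'
  exact ⟨hG1, hG2, hG3, hG4⟩

lemma conditions_of_mp (hA : IsMoorePenrose A A') (hB : IsMoorePenrose B B')
    (hQ : IsMoorePenrose (A * B) (B' * A')) :
    B * B' * (Aᵀ * A * B) = Aᵀ * A * B ∧ A' * A * (B * Bᵀ * Aᵀ) = B * Bᵀ * Aᵀ := by
  have htA' : Aᵀ*A'ᵀ = A'*A := by rw [← Matrix.transpose_mul, hA.2.2.2]
  have htB : B'ᵀ*Bᵀ = B*B' := by rw [← Matrix.transpose_mul, hB.2.2.1]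
  have hSS : A'*A*(A'*A) = A'*A := by rw [← Matrix.mul_assoc, hA.2.1]
  have hTT : B*B'*(B*B') = B*B' := by rw [← Matrix.mul_assoc, hB.1]
  constructor
  · -- E1
    have hkey : Aᵀ*A*B = A'*A*(B*B'*(Aᵀ*A*B)) := by
      calc Aᵀ*A*B = Aᵀ*((A*B)*(B'*A')*(A*B)) := by rw [hQ.1, Matrix.mul_assoc]
        _ = Aᵀ*((A*B)*(B'*A'))*(A*B) := by simp only [Matrix.mul_assoc]
        _ = Aᵀ*(((A*B)*(B'*A'))ᵀ)*(A*B) := by rw [hQ.2.2.1]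
        _ = Aᵀ*((A'ᵀ*B'ᵀ)*(Bᵀ*Aᵀ))*(A*B) := by
            rw [Matrix.transpose_mul, Matrix.transpose_mul, Matrix.transpose_mul]
        _ = (Aᵀ*A'ᵀ)*((B'ᵀ*Bᵀ)*(Aᵀ*(A*B))) := by simp only [Matrix.mul_assoc]
        _ = (A'*A)*((B*B')*(Aᵀ*(A*B))) := by rw [htA', htB]
        _ = A'*A*(B*B'*(Aᵀ*A*B)) := by simp only [Matrix.mul_assoc]
    have hSR : A'*A*(Aᵀ*A*B) = Aᵀ*A*B := by
      conv_lhs => rw [hkey]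
      rw [← Matrix.mul_assoc, hSS, ← hkey]
    have hRtS : (Aᵀ*A*B)ᵀ*(A'*A) = (Aᵀ*A*B)ᵀ := by
      rw [← hA.2.2.2, ← Matrix.transpose_mul, hSR]
    have hmain : (Aᵀ*A*B)ᵀ*(B*B'*(Aᵀ*A*B)) = (Aᵀ*A*B)ᵀ*(Aᵀ*A*B) := by
      calc (Aᵀ*A*B)ᵀ*(B*B'*(Aᵀ*A*B))
          = ((Aᵀ*A*B)ᵀ*(A'*A))*(B*B'*(Aᵀ*A*B)) := by rw [hRtS]
        _ = (Aᵀ*A*B)ᵀ*(A'*A*(B*B'*(Aᵀ*A*B))) := by simp only [Matrix.mul_assoc]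
        _ = (Aᵀ*A*B)ᵀ*(Aᵀ*A*B) := by rw [← hkey]
    have h1 : (B*B'*(Aᵀ*A*B))ᵀ*(B*B'*(Aᵀ*A*B)) = (Aᵀ*A*B)ᵀ*(Aᵀ*A*B) := by
      calc (B*B'*(Aᵀ*A*B))ᵀ*(B*B'*(Aᵀ*A*B))
          = (Aᵀ*A*B)ᵀ*((B*B')ᵀ*(B*B'*(Aᵀ*A*B))) := by
            rw [Matrix.transpose_mul, Matrix.mul_assoc]
        _ = (Aᵀ*A*B)ᵀ*(B*B'*(B*B'*(Aᵀ*A*B))) := by rw [hB.2.2.1]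
        _ = (Aᵀ*A*B)ᵀ*(Aᵀ*A*B) := by
            rw [← Matrix.mul_assoc (B*B') (B*B') (Aᵀ*A*B), hTT, hmain]
    have h2 : (B*B'*(Aᵀ*A*B))ᵀ*(Aᵀ*A*B) = (Aᵀ*A*B)ᵀ*(Aᵀ*A*B) := by
      rw [Matrix.transpose_mul, hB.2.2.1, Matrix.mul_assoc, hmain]
    have hXtX : (B*B'*(Aᵀ*A*B) - Aᵀ*A*B)ᵀ*(B*B'*(Aᵀ*A*B) - Aᵀ*A*B) = 0 := by
      rw [Matrix.transpose_sub, Matrix.sub_mul, Matrix.mul_sub, Matrix.mul_sub,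
        h1, h2, hmain]
      simp
    have hX0 := tr_mul_self_eq_zero hXtX
    exact sub_eq_zero.mp hX0
  · -- E2
    have hkey2 : B*Bᵀ*Aᵀ = B*B'*(A'*A*(B*Bᵀ*Aᵀ)) := by
      calc B*Bᵀ*Aᵀ = B*((A*B)ᵀ) := by rw [Matrix.transpose_mul, Matrix.mul_assoc]
        _ = B*(((A*B)*(B'*A')*(A*B))ᵀ) := by rw [hQ.1]
        _ = B*(((A*B)*((B'*A')*(A*B)))ᵀ) := by simp only [Matrix.mul_assoc]
        _ = B*(((B'*A')*(A*B))ᵀ*(A*B)ᵀ) := by rw [Matrix.transpose_mul (A*B) ((B'*A')*(A*B))]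
        _ = B*((B'*A')*(A*B)*((A*B)ᵀ)) := by rw [hQ.2.2.2]
        _ = B*B'*(A'*A*(B*Bᵀ*Aᵀ)) := by
            rw [Matrix.transpose_mul]
            simp only [Matrix.mul_assoc]
    have hTR2 : B*B'*(B*Bᵀ*Aᵀ) = B*Bᵀ*Aᵀ := by
      conv_lhs => rw [hkey2]
      rw [← Matrix.mul_assoc, hTT, ← hkey2]
    have hR2tT : (B*Bᵀ*Aᵀ)ᵀ*(B*B') = (B*Bᵀ*Aᵀ)ᵀ := by
      rw [← hB.2.2.1, ← Matrix.transpose_mul, hTR2]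
    have hmain2 : (B*Bᵀ*Aᵀ)ᵀ*(A'*A*(B*Bᵀ*Aᵀ)) = (B*Bᵀ*Aᵀ)ᵀ*(B*Bᵀ*Aᵀ) := by
      calc (B*Bᵀ*Aᵀ)ᵀ*(A'*A*(B*Bᵀ*Aᵀ))
          = ((B*Bᵀ*Aᵀ)ᵀ*(B*B'))*(A'*A*(B*Bᵀ*Aᵀ)) := by rw [hR2tT]
        _ = (B*Bᵀ*Aᵀ)ᵀ*(B*B'*(A'*A*(B*Bᵀ*Aᵀ))) := by simp only [Matrix.mul_assoc]
        _ = (B*Bᵀ*Aᵀ)ᵀ*(B*Bᵀ*Aᵀ) := by rw [← hkey2]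
    have h1 : (A'*A*(B*Bᵀ*Aᵀ))ᵀ*(A'*A*(B*Bᵀ*Aᵀ)) = (B*Bᵀ*Aᵀ)ᵀ*(B*Bᵀ*Aᵀ) := by
      calc (A'*A*(B*Bᵀ*Aᵀ))ᵀ*(A'*A*(B*Bᵀ*Aᵀ))
          = (B*Bᵀ*Aᵀ)ᵀ*((A'*A)ᵀ*(A'*A*(B*Bᵀ*Aᵀ))) := by
            rw [Matrix.transpose_mul, Matrix.mul_assoc]
        _ = (B*Bᵀ*Aᵀ)ᵀ*(A'*A*(A'*A*(B*Bᵀ*Aᵀ))) := by rw [hA.2.2.2]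
        _ = (B*Bᵀ*Aᵀ)ᵀ*(B*Bᵀ*Aᵀ) := by
            rw [← Matrix.mul_assoc (A'*A) (A'*A) (B*Bᵀ*Aᵀ), hSS, hmain2]
    have h2 : (A'*A*(B*Bᵀ*Aᵀ))ᵀ*(B*Bᵀ*Aᵀ) = (B*Bᵀ*Aᵀ)ᵀ*(B*Bᵀ*Aᵀ) := by
      rw [Matrix.transpose_mul, hA.2.2.2, Matrix.mul_assoc, hmain2]
    have hXtX : (A'*A*(B*Bᵀ*Aᵀ) - B*Bᵀ*Aᵀ)ᵀ*(A'*A*(B*Bᵀ*Aᵀ) - B*Bᵀ*Aᵀ) = 0 := by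
      rw [Matrix.transpose_sub, Matrix.sub_mul, Matrix.mul_sub, Matrix.mul_sub,
        h1, h2, hmain2]
      simp
    have hX0 := tr_mul_self_eq_zero hXtX
    exact sub_eq_zero.mp hX0

end Aux

theorem stmt11 {t1 t2 t3 : ℕ}
    (D1 : Matrix (Fin t1) (Fin t2) ℝ) (D2 : Matrix (Fin t2) (Fin t3) ℝ)
    (D1d : Matrix (Fin t2) (Fin t1) ℝ) (hD1d : IsMoorePenrose D1 D1d)
    (D2d : Matrix (Fin t3) (Fin t2) ℝ) (hD2d : IsMoorePenrose D2 D2d)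
    (D12d : Matrix (Fin t3) (Fin t1) ℝ) (hD12d : IsMoorePenrose (D1 * D2) D12d) :
    D12d = D2d * D1d ↔
      (LinearMap.range (D1ᵀ * D1 * D2).mulVecLin ≤ LinearMap.range D2.mulVecLin ∧
        LinearMap.range (D2 * D2ᵀ * D1ᵀ).mulVecLin ≤ LinearMap.range D1ᵀ.mulVecLin) := by
  have hconv : D1ᵀ * D1dᵀ = D1d * D1 := by rw [← Matrix.transpose_mul, hD1d.2.2.2]
  rw [range_le_iff hD2d (D1ᵀ * D1 * D2), range_le_iff hD1d.transpose (D2 * D2ᵀ * D1ᵀ), hconv]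
  constructor
  · intro h
    have hMP : IsMoorePenrose (D1 * D2) (D2d * D1d) := h ▸ hD12d
    exact conditions_of_mp hD1d hD2d hMP
  · rintro ⟨h1, h2⟩
    exact mp_unique hD12d (mp_of_conditions hD1d hD2d h1 h2)
end
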